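/- arXiv:1009.5683 — 8 statements merged into one kernel-verified Lean document; each statement's English description precedes it below -/
import Mathlib

section
/- Let S be a semigroup and let e, f, g, h be idempotents of S forming an E-square, i.e. e*f = f, f*e = e, f*g = f, g*f = g, g*h = h, h*g = g, h*e = h, e*h = e. Suppose there exists an idempotent t of S that left-to-right singularizes the square, i.e. t*e = e, t*h = h, e*t = f and h*t = g. Then e*g = f, g*e = h, f*h = e, h*f = g, and e*f*g*h*e = e; in particular the set {e, f, g, h} is a rectangular band. -/
/-- An E-square of idempotents in a semigroup that is left-to-right singularized
by an idempotent `t` is a rectangular band: `e*g = f`, `g*e = h`, `f*h = e`,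
`h*f = g`, and `e*f*g*h*e = e`. -/
theorem esquare_singular_rectangular_band {S : Type*} [Semigroup S]
    (e f g h t : S)
    (he : e * e = e) (hf : f * f = f) (hg : g * g = g) (hh : h * h = h)
    (hef : e * f = f) (hfe : f * e = e)
    (hfg : f * g = f) (hgf : g * f = g)
    (hgh : g * h = h) (hhg : h * g = g)
    (hhe : h * e = h) (heh : e * h = e)
    (ht : t * t = t)
    (hte : t * e = e) (hth : t * h = h) (het : e * t = f) (hht : h * t = g) :
    e * g = f ∧ g * e = h ∧ f * h = e ∧ h * f = g ∧ e * f * g * h * e = e := by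
  have h1 : e * g = f := by rw [← hht, ← mul_assoc, heh, het]
  have h2 : g * e = h := by rw [← hht, mul_assoc, hte, hhe]
  have h3 : f * h = e := by rw [← het, mul_assoc, hth, heh]
  have h4 : h * f = g := by rw [← het, ← mul_assoc, hhe, hht]
  exact ⟨h1, h2, h3, h4, by rw [hef, hfg, h3, he]⟩
end

section
/- Let Q be a division ring (possibly noncommutative), n a positive natural number, and let e, f, g, h be pairwise distinct idempotent n×n matrices over Q forming an E-square, i.e. e*f = f, f*e = e, f*g = f, g*f = g, g*h = h, h*g = g, h*e = h, e*h = e. If e*f*g*h*e = e (i.e. {e,f,g,h} is a rectangular band), then the E-square is singular: there exists an idempotent matrix t (t*t = t) with t*e = e, t*h = h, e*t = f and h*t = g. -/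
open Matrix

section AbstractLemma
variable {K : Type*} [DivisionRing K] {V : Type*} [AddCommGroup V] [Module K V]

private lemma exists_singularizer_linmap (A B C D : V →ₗ[K] V)
    (hA : A ∘ₗ A = A) (hD : D ∘ₗ D = D)
    (hAB : A ∘ₗ B = B) (hBA : B ∘ₗ A = A)
    (hBC : B ∘ₗ C = B) (hCB : C ∘ₗ B = C)
    (hCD : C ∘ₗ D = D) (hDC : D ∘ₗ C = C)
    (hDA : D ∘ₗ A = D) (hAD : A ∘ₗ D = A)
    (hband : (B ∘ₗ D) ∘ₗ A = A) :
    ∃ T : V →ₗ[K] V, T ∘ₗ T = T ∧ T ∘ₗ A = A ∧ T ∘ₗ D = D ∧ A ∘ₗ T = B ∧ D ∘ₗ T = C := by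
  have hBD : B ∘ₗ D = A := by
    calc B ∘ₗ D = (B ∘ₗ D) ∘ₗ A := by rw [LinearMap.comp_assoc, hDA]
    _ = A := hband
  have hCA : C ∘ₗ A = D := by
    calc C ∘ₗ A = C ∘ₗ (B ∘ₗ D) := by rw [hBD]
    _ = (C ∘ₗ B) ∘ₗ D := by rw [LinearMap.comp_assoc]
    _ = D := by rw [hCB, hCD]
  have hDB : D ∘ₗ B = C := by
    calc D ∘ₗ B = (C ∘ₗ A) ∘ₗ B := by rw [hCA]
    _ = C ∘ₗ (A ∘ₗ B) := by rw [LinearMap.comp_assoc]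
    _ = C := by rw [hAB, hCB]
  set S : Submodule K V := LinearMap.range A ⊔ LinearMap.range D with hS
  obtain ⟨W, hW⟩ := Submodule.exists_isCompl S
  set Pr : V →ₗ[K] V := S.subtype ∘ₗ S.linearProjOfIsCompl W hW with hPr
  have hPrS : ∀ x ∈ S, Pr x = x := by
    intro x hx
    have : S.linearProjOfIsCompl W hW x = ⟨x, hx⟩ :=
      Submodule.linearProjOfIsCompl_apply_left hW ⟨x, hx⟩
    simp [hPr, this]
  have hPrmem : ∀ x, Pr x ∈ S := fun x => (S.linearProjOfIsCompl W hW x).2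
  have hAmem : ∀ x, A x ∈ S := fun x => le_sup_left (α := Submodule K V) (LinearMap.mem_range_self A x)
  have hDmem : ∀ x, D x ∈ S := fun x => le_sup_right (α := Submodule K V) (LinearMap.mem_range_self D x)
  have hAeqB : ∀ x ∈ S, A x = B x := by
    intro x hx
    rcases Submodule.mem_sup.mp hx with ⟨y, hy, z, hz, rfl⟩
    rcases hy with ⟨y', rfl⟩
    rcases hz with ⟨z', rfl⟩
    have e1 : A (A y') = A y' := LinearMap.ext_iff.mp hA y'
    have e2 : B (A y') = A y' := LinearMap.ext_iff.mp hBA y'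
    have e3 : A (D z') = A z' := LinearMap.ext_iff.mp hAD z'
    have e4 : B (D z') = A z' := LinearMap.ext_iff.mp hBD z'
    simp [map_add, e1, e2, e3, e4]
  have hDeqC : ∀ x ∈ S, D x = C x := by
    intro x hx
    rcases Submodule.mem_sup.mp hx with ⟨y, hy, z, hz, rfl⟩
    rcases hy with ⟨y', rfl⟩
    rcases hz with ⟨z', rfl⟩
    have e1 : D (A y') = D y' := LinearMap.ext_iff.mp hDA y'
    have e2 : C (A y') = D y' := LinearMap.ext_iff.mp hCA y'
    have e3 : D (D z') = D z' := LinearMap.ext_iff.mp hD z'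
    have e4 : C (D z') = D z' := LinearMap.ext_iff.mp hCD z'
    simp [map_add, e1, e2, e3, e4]
  set T : V →ₗ[K] V := Pr + B ∘ₗ (LinearMap.id - Pr) with hT
  have hTapp : ∀ x, T x = Pr x + B (x - Pr x) := by intro x; simp [hT]
  have hTid : ∀ x ∈ S, T x = x := by
    intro x hx
    rw [hTapp, hPrS x hx, sub_self, map_zero, add_zero]
  have hTmem : ∀ x, T x ∈ S := by
    intro x
    rw [hTapp]
    refine S.add_mem (hPrmem x) ?_
    have : B (x - Pr x) = A (B (x - Pr x)) := (LinearMap.ext_iff.mp hAB _).symm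
    rw [this]
    exact hAmem _
  refine ⟨T, ?_, ?_, ?_, ?_, ?_⟩
  · exact LinearMap.ext fun x => hTid (T x) (hTmem x)
  · exact LinearMap.ext fun x => hTid (A x) (hAmem x)
  · exact LinearMap.ext fun x => hTid (D x) (hDmem x)
  · refine LinearMap.ext fun x => ?_
    have : A (T x) = A (Pr x) + B (x - Pr x) := by
      rw [hTapp, map_add]
      congr 1
      exact LinearMap.ext_iff.mp hAB _
    rw [LinearMap.comp_apply, this, hAeqB _ (hPrmem x), map_sub, add_sub_cancel]
  · refine LinearMap.ext fun x => ?_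
    have : D (T x) = D (Pr x) + C (x - Pr x) := by
      rw [hTapp, map_add]
      congr 1
      exact LinearMap.ext_iff.mp hDB _
    rw [LinearMap.comp_apply, this, hDeqC _ (hPrmem x), map_sub, add_sub_cancel]

end AbstractLemma

section Bridge
variable {Q : Type*} [DivisionRing Q] {n : ℕ}

/-- `mulVec` as a `Qᵐᵒᵖ`-linear map (covariant in matrix multiplication). -/
private def mvLin (M : Matrix (Fin n) (Fin n) Q) : (Fin n → Q) →ₗ[Qᵐᵒᵖ] (Fin n → Q) where
  toFun v := M *ᵥ v
  map_add' u v := Matrix.mulVec_add M u v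
  map_smul' a v := by
    ext i
    simp only [Matrix.mulVec, dotProduct, Pi.smul_apply, MulOpposite.smul_eq_mul_unop,
      RingHom.id_apply]
    rw [Finset.sum_mul]
    exact Finset.sum_congr rfl fun j _ => (mul_assoc _ _ _).symm

private lemma mvLin_mul (M N : Matrix (Fin n) (Fin n) Q) :
    mvLin (M * N) = mvLin M ∘ₗ mvLin N :=
  LinearMap.ext fun v => (Matrix.mulVec_mulVec v M N).symm

private lemma mvLin_inj : Function.Injective (mvLin (Q := Q) (n := n)) := by
  intro M N hMN
  ext i j
  have h1 := congrFun (congrArg (fun (L : (Fin n → Q) →ₗ[Qᵐᵒᵖ] (Fin n → Q)) => L (Pi.single j 1)) hMN) i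
  simpa [mvLin, Matrix.mulVec_single] using h1

private lemma mvLin_surj (T : (Fin n → Q) →ₗ[Qᵐᵒᵖ] (Fin n → Q)) :
    ∃ M : Matrix (Fin n) (Fin n) Q, mvLin M = T := by
  refine ⟨Matrix.of fun i j => T (Pi.single j 1) i, ?_⟩
  refine LinearMap.ext fun v => ?_
  have hv : v = ∑ j, MulOpposite.op (v j) • Pi.single j (1 : Q) := by
    ext i
    rw [Finset.sum_apply]
    simp [MulOpposite.smul_eq_mul_unop, Pi.single_apply]
  conv_rhs => rw [hv]
  rw [map_sum]
  ext i
  rw [Finset.sum_apply]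
  simp [mvLin, Matrix.mulVec, dotProduct, MulOpposite.smul_eq_mul_unop]

end Bridge

/-- Every non-trivial rectangular band (nondegenerate E-square `(e,f,g,h)` with
`e*f*g*h*e = e`) of idempotent `n × n` matrices over a division ring is a
singular square: some idempotent matrix `t` left-to-right singularizes it. -/
theorem rectangular_band_is_singular_square {Q : Type*} [DivisionRing Q] {n : ℕ}
    (hn : 0 < n)
    (e f g h : Matrix (Fin n) (Fin n) Q)
    (hdist : e ≠ f ∧ e ≠ g ∧ e ≠ h ∧ f ≠ g ∧ f ≠ h ∧ g ≠ h)
    (he : e * e = e) (hf : f * f = f) (hg : g * g = g) (hh : h * h = h)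
    (hef : e * f = f) (hfe : f * e = e)
    (hfg : f * g = f) (hgf : g * f = g)
    (hgh : g * h = h) (hhg : h * g = g)
    (hhe : h * e = h) (heh : e * h = e)
    (hband : e * f * g * h * e = e) :
    ∃ t : Matrix (Fin n) (Fin n) Q,
      t * t = t ∧ t * e = e ∧ t * h = h ∧ e * t = f ∧ h * t = g := by
  have hfhe : f * h * e = e := by
    calc f * h * e = e * f * g * h * e := by rw [hef, hfg]
    _ = e := hband
  obtain ⟨T, hT1, hT2, hT3, hT4, hT5⟩ :=
    exists_singularizer_linmap (mvLin e) (mvLin f) (mvLin g) (mvLin h)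
      (by rw [← mvLin_mul, he]) (by rw [← mvLin_mul, hh])
      (by rw [← mvLin_mul, hef]) (by rw [← mvLin_mul, hfe])
      (by rw [← mvLin_mul, hfg]) (by rw [← mvLin_mul, hgf])
      (by rw [← mvLin_mul, hgh]) (by rw [← mvLin_mul, hhg])
      (by rw [← mvLin_mul, hhe]) (by rw [← mvLin_mul, heh])
      (by rw [← mvLin_mul, ← mvLin_mul, hfhe])
  obtain ⟨t, htT⟩ := mvLin_surj T
  refine ⟨t, ?_, ?_, ?_, ?_, ?_⟩
  · apply mvLin_inj; rw [mvLin_mul, htT, hT1]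
  · apply mvLin_inj; rw [mvLin_mul, htT, hT2]
  · apply mvLin_inj; rw [mvLin_mul, htT, hT3]
  · apply mvLin_inj; rw [mvLin_mul, htT, hT4]
  · apply mvLin_inj; rw [mvLin_mul, htT, hT5]
end

section
/- Let Q be a division ring and let matrices be indexed by the type Fin k ⊕ Fin m. Let e = Matrix.fromBlocks 1 0 0 0, and let f, g, h be idempotent matrices over Q (f*f = f, g*g = g, h*h = h) such that (e,f,g,h) is an E-square (e*f = f, f*e = e, f*g = f, g*f = g, g*h = h, h*g = g, h*e = h, e*h = e) and e*f*g*h*e = e. Then there exist matrices a : Matrix (Fin m) (Fin k) Q and b : Matrix (Fin k) (Fin m) Q with b*a = 0 such that f = Matrix.fromBlocks 1 b 0 0, h = Matrix.fromBlocks 1 0 a 0, and g = Matrix.fromBlocks 1 b a (a*b). -/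
open Matrix

/-- If `e` is the block identity idempotent and `(e,f,g,h)` is an E-square of
idempotent matrices over a division ring with `e*f*g*h*e = e`, then `f`, `h`, `g`
have the block forms `[1 b; 0 0]`, `[1 0; a 0]`, `[1 b; a ab]` with `b*a = 0`. -/
theorem esquare_block_form {Q : Type*} [DivisionRing Q] {k m : ℕ}
    (f g h : Matrix (Fin k ⊕ Fin m) (Fin k ⊕ Fin m) Q)
    (e : Matrix (Fin k ⊕ Fin m) (Fin k ⊕ Fin m) Q)
    (hedef : e = Matrix.fromBlocks 1 0 0 0)
    (hf : f * f = f) (hg : g * g = g) (hh : h * h = h)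
    (hef : e * f = f) (hfe : f * e = e)
    (hfg : f * g = f) (hgf : g * f = g)
    (hgh : g * h = h) (hhg : h * g = g)
    (hhe : h * e = h) (heh : e * h = e)
    (hband : e * f * g * h * e = e) :
    ∃ (a : Matrix (Fin m) (Fin k) Q) (b : Matrix (Fin k) (Fin m) Q),
      b * a = 0 ∧
      f = Matrix.fromBlocks 1 b 0 0 ∧
      h = Matrix.fromBlocks 1 0 a 0 ∧
      g = Matrix.fromBlocks 1 b a (a * b) := by
  subst hedef
  obtain ⟨f11, f12, f21, f22, rfl⟩ : ∃ A B C D, f = fromBlocks A B C D :=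
    ⟨_, _, _, _, (fromBlocks_toBlocks f).symm⟩
  obtain ⟨g11, g12, g21, g22, rfl⟩ : ∃ A B C D, g = fromBlocks A B C D :=
    ⟨_, _, _, _, (fromBlocks_toBlocks g).symm⟩
  obtain ⟨h11, h12, h21, h22, rfl⟩ : ∃ A B C D, h = fromBlocks A B C D :=
    ⟨_, _, _, _, (fromBlocks_toBlocks h).symm⟩
  simp only [fromBlocks_multiply, Matrix.one_mul, Matrix.mul_one, Matrix.zero_mul,
    Matrix.mul_zero, add_zero, zero_add, fromBlocks_inj] at hef hfe hgf hhg hgh hhe heh hband hfg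
  obtain ⟨-, -, hf21, hf22⟩ := hef
  obtain ⟨hf11, -, -, -⟩ := hfe
  obtain ⟨-, hh12, -, hh22⟩ := hhe
  obtain ⟨hh11, -, -, -⟩ := heh
  subst hf21 hf22 hf11 hh12 hh22 hh11
  simp only [Matrix.zero_mul, Matrix.mul_zero, Matrix.one_mul, Matrix.mul_one, add_zero,
    zero_add, fromBlocks_inj] at hgf hhg hgh hband hfg
  obtain ⟨-, hg12, -, hg22⟩ := hgf
  obtain ⟨-, -, hg21, -⟩ := hhg
  refine ⟨h21, f12, ?_, rfl, rfl, ?_⟩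
  · have h1 := hband.1
    rw [hfg.2.1, hfg.1] at h1
    simpa using h1
  · have hba : f12 * h21 = 0 := by
      have h1 := hband.1
      rw [hfg.2.1, hfg.1] at h1
      simpa using h1
    obtain ⟨hgh1, -, -, -⟩ := hgh
    subst hg21 hg22 hg12
    have hg11 : g11 = 1 := by
      rwa [Matrix.mul_assoc, hba, Matrix.mul_zero, add_zero] at hgh1
    subst hg11
    simp
end

section
/- Let Q be a division ring, a : Matrix (Fin m) (Fin k) Q and b : Matrix (Fin k) (Fin m) Q with b*a = 0, and let c : Matrix (Fin m) (Fin m) Q satisfy c*c = c, c*a = a and b*c = 0. Define, as matrices indexed by Fin k ⊕ Fin m: e = Matrix.fromBlocks 1 0 0 0, f = Matrix.fromBlocks 1 b 0 0, h = Matrix.fromBlocks 1 0 a 0, g = Matrix.fromBlocks 1 b a (a*b), and η = Matrix.fromBlocks 1 b 0 c. Then η is idempotent (η*η = η) and η left-to-right singularizes the square: η*e = e, η*h = h, e*η = f and h*η = g. -/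
open Matrix

/-- Given `b*a = 0` and an idempotent `c` with `c*a = a` and `b*c = 0`, the block
matrix `η = [1 b; 0 c]` is an idempotent which left-to-right singularizes the
E-square `(e,f,g,h)` of block matrices. -/
theorem eta_singularizes {Q : Type*} [DivisionRing Q] {k m : ℕ}
    (a : Matrix (Fin m) (Fin k) Q) (b : Matrix (Fin k) (Fin m) Q)
    (c : Matrix (Fin m) (Fin m) Q)
    (hba : b * a = 0) (hc : c * c = c) (hca : c * a = a) (hbc : b * c = 0)
    (e f g h η : Matrix (Fin k ⊕ Fin m) (Fin k ⊕ Fin m) Q)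
    (hedef : e = Matrix.fromBlocks 1 0 0 0)
    (hfdef : f = Matrix.fromBlocks 1 b 0 0)
    (hhdef : h = Matrix.fromBlocks 1 0 a 0)
    (hgdef : g = Matrix.fromBlocks 1 b a (a * b))
    (hηdef : η = Matrix.fromBlocks 1 b 0 c) :
    η * η = η ∧ η * e = e ∧ η * h = h ∧ e * η = f ∧ h * η = g := by
  subst hedef hfdef hhdef hgdef hηdef
  refine ⟨?_, ?_, ?_, ?_, ?_⟩ <;>
    simp [Matrix.fromBlocks_multiply, hba, hc, hca, hbc]
end

section
/- Let Q be a division ring and let v₁, v₂, w₁, w₂ : Matrix (Fin n) (Fin k) Q be such that each of the four k×k matrices w₁ᵀ*v₁, w₁ᵀ*v₂, w₂ᵀ*v₁, w₂ᵀ*v₂ is invertible (has a two-sided inverse). Define the idempotent n×n matrices e = v₁*(w₁ᵀ*v₁)⁻¹*w₁ᵀ, f = v₂*(w₁ᵀ*v₂)⁻¹*w₁ᵀ, g = v₂*(w₂ᵀ*v₂)⁻¹*w₂ᵀ, h = v₁*(w₂ᵀ*v₁)⁻¹*w₂ᵀ. Then e*f*g*h*e = e (i.e. the E-square (e,f,g,h)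 is a rectangular band) if and only if (w₁ᵀ*v₂)*(w₂ᵀ*v₂)⁻¹*(w₂ᵀ*v₁)*(w₁ᵀ*v₁)⁻¹ = 1. -/
open Matrix

set_option maxHeartbeats 1600000 in
/-- The E-square of idempotents built from `v₁, v₂, w₁, w₂` is a rectangular band
(`e*f*g*h*e = e`) iff `(w₁ᵀv₂)(w₂ᵀv₂)⁻¹(w₂ᵀv₁)(w₁ᵀv₁)⁻¹ = 1`. -/
theorem esquare_band_iff_identity {Q : Type*} [DivisionRing Q] {n k : ℕ}
    (v₁ v₂ w₁ w₂ : Matrix (Fin n) (Fin k) Q)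
    [Invertible (w₁ᵀ * v₁)] [Invertible (w₁ᵀ * v₂)]
    [Invertible (w₂ᵀ * v₁)] [Invertible (w₂ᵀ * v₂)]
    (e f g h : Matrix (Fin n) (Fin n) Q)
    (hedef : e = v₁ * ⅟(w₁ᵀ * v₁) * w₁ᵀ)
    (hfdef : f = v₂ * ⅟(w₁ᵀ * v₂) * w₁ᵀ)
    (hgdef : g = v₂ * ⅟(w₂ᵀ * v₂) * w₂ᵀ)
    (hhdef : h = v₁ * ⅟(w₂ᵀ * v₁) * w₂ᵀ) :
    e * f * g * h * e = e ↔
      (w₁ᵀ * v₂) * ⅟(w₂ᵀ * v₂) * (w₂ᵀ * v₁) * ⅟(w₁ᵀ * v₁) = 1 := by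
  subst hedef hfdef hgdef hhdef
  have key : ∀ M N : Matrix (Fin k) (Fin k) Q,
      v₁ * M * w₁ᵀ = v₁ * N * w₁ᵀ → M = N := by
    intro M N hMN
    have h2 : (w₁ᵀ * v₁) * M * (w₁ᵀ * v₁) = (w₁ᵀ * v₁) * N * (w₁ᵀ * v₁) := by
      have : w₁ᵀ * (v₁ * M * w₁ᵀ) * v₁ = w₁ᵀ * (v₁ * N * w₁ᵀ) * v₁ := by rw [hMN]
      simpa [Matrix.mul_assoc] using this
    have cAA : ∀ M : Matrix (Fin k) (Fin k) Q,
        ⅟(w₁ᵀ * v₁) * ((w₁ᵀ * v₁) * M * (w₁ᵀ * v₁)) * ⅟(w₁ᵀ * v₁) = M := by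
      intro M
      rw [Matrix.mul_assoc (w₁ᵀ * v₁) M, invOf_mul_cancel_left,
        mul_invOf_cancel_right]
    calc M = ⅟(w₁ᵀ * v₁) * ((w₁ᵀ * v₁) * M * (w₁ᵀ * v₁)) * ⅟(w₁ᵀ * v₁) :=
            (cAA M).symm
      _ = ⅟(w₁ᵀ * v₁) * ((w₁ᵀ * v₁) * N * (w₁ᵀ * v₁)) * ⅟(w₁ᵀ * v₁) := by rw [h2]
      _ = N := cAA N
  have hsimp :
      (v₁ * ⅟(w₁ᵀ * v₁) * w₁ᵀ) * (v₂ * ⅟(w₁ᵀ * v₂) * w₁ᵀ) *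
        (v₂ * ⅟(w₂ᵀ * v₂) * w₂ᵀ) * (v₁ * ⅟(w₂ᵀ * v₁) * w₂ᵀ) *
        (v₁ * ⅟(w₁ᵀ * v₁) * w₁ᵀ)
      = v₁ * (⅟(w₁ᵀ * v₁) *
          ((w₁ᵀ * v₂) * ⅟(w₂ᵀ * v₂) * (w₂ᵀ * v₁) * ⅟(w₁ᵀ * v₁))) * w₁ᵀ := by
    simp only [Matrix.mul_assoc]
    simp only [← Matrix.mul_assoc w₁ᵀ v₂, ← Matrix.mul_assoc w₂ᵀ v₁]
    simp only [Matrix.invOf_mul_cancel_left]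
  rw [hsimp]
  constructor
  · intro hyp
    have := key _ _ (hyp.trans (by rw [show v₁ * ⅟(w₁ᵀ * v₁) * w₁ᵀ
      = v₁ * (⅟(w₁ᵀ * v₁) * 1) * w₁ᵀ by rw [mul_one]]))
    -- this : ⅟A * X = ⅟A * 1
    have h3 : (w₁ᵀ * v₁) * (⅟(w₁ᵀ * v₁) *
        ((w₁ᵀ * v₂) * ⅟(w₂ᵀ * v₂) * (w₂ᵀ * v₁) * ⅟(w₁ᵀ * v₁)))
        = (w₁ᵀ * v₁) * ⅟(w₁ᵀ * v₁) := by rw [this]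
    rw [mul_invOf_cancel_left, mul_invOf_self] at h3
    exact h3
  · intro hyp
    rw [hyp, mul_one]
end

section
/- Let Q be a division ring, and let v₁, v₂, w₁, w₂ : Matrix (Fin n) (Fin k) Q each be of full rank k in the sense that v₁ and v₂ have left inverses and w₁ᵀ and w₂ᵀ have right inverses. Set a = v₁*w₁ᵀ and b = v₂*w₂ᵀ. Then a and b are L-related in the monoid M_n(Q) (there exist x, y with x*a = b and y*b = a) if and only if there exists an invertible k×k matrix m over Q (having a two-sided inverse) with w₂ᵀ = m*w₁ᵀ, i.e. if and only if a and b have the same row space. -/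
open Matrix

/-- `a = v₁*w₁ᵀ` and `b = v₂*w₂ᵀ` are L-related in the full linear monoid iff
`w₂ᵀ = m*w₁ᵀ` for some invertible `k × k` matrix `m` (same row space). -/
theorem lrelated_iff_same_row_space {Q : Type*} [DivisionRing Q] {n k : ℕ}
    (v₁ v₂ w₁ w₂ : Matrix (Fin n) (Fin k) Q)
    (hv₁ : ∃ u : Matrix (Fin k) (Fin n) Q, u * v₁ = 1)
    (hv₂ : ∃ u : Matrix (Fin k) (Fin n) Q, u * v₂ = 1)
    (hw₁ : ∃ u' : Matrix (Fin n) (Fin k) Q, w₁ᵀ * u' = 1)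
    (hw₂ : ∃ u' : Matrix (Fin n) (Fin k) Q, w₂ᵀ * u' = 1)
    (a b : Matrix (Fin n) (Fin n) Q)
    (hadef : a = v₁ * w₁ᵀ) (hbdef : b = v₂ * w₂ᵀ) :
    (∃ x y : Matrix (Fin n) (Fin n) Q, x * a = b ∧ y * b = a) ↔
      ∃ m : Matrix (Fin k) (Fin k) Q,
        (∃ m' : Matrix (Fin k) (Fin k) Q, m * m' = 1 ∧ m' * m = 1) ∧
        w₂ᵀ = m * w₁ᵀ := by
  obtain ⟨u₁, hu₁⟩ := hv₁
  obtain ⟨u₂, hu₂⟩ := hv₂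
  obtain ⟨r₁, hr₁⟩ := hw₁
  obtain ⟨r₂, hr₂⟩ := hw₂
  subst hadef hbdef
  constructor
  · rintro ⟨x, y, hx, hy⟩
    refine ⟨u₂ * x * v₁, ⟨u₁ * y * v₂, ?_, ?_⟩, ?_⟩
    · -- (u₂*x*v₁)*(u₁*y*v₂) = 1
      have h2 : (u₂ * x * v₁) * w₁ᵀ = w₂ᵀ := by
        calc (u₂ * x * v₁) * w₁ᵀ = u₂ * (x * (v₁ * w₁ᵀ)) := by simp only [Matrix.mul_assoc]
        _ = u₂ * (v₂ * w₂ᵀ) := by rw [hx]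
        _ = (u₂ * v₂) * w₂ᵀ := by simp only [Matrix.mul_assoc]
        _ = w₂ᵀ := by rw [hu₂, Matrix.one_mul]
      have h1 : (u₁ * y * v₂) * w₂ᵀ = w₁ᵀ := by
        calc (u₁ * y * v₂) * w₂ᵀ = u₁ * (y * (v₂ * w₂ᵀ)) := by simp only [Matrix.mul_assoc]
        _ = u₁ * (v₁ * w₁ᵀ) := by rw [hy]
        _ = (u₁ * v₁) * w₁ᵀ := by simp only [Matrix.mul_assoc]
        _ = w₁ᵀ := by rw [hu₁, Matrix.one_mul]
      have : ((u₂ * x * v₁) * (u₁ * y * v₂)) * (w₂ᵀ * r₂) = w₂ᵀ * r₂ := by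
        calc ((u₂ * x * v₁) * (u₁ * y * v₂)) * (w₂ᵀ * r₂)
            = ((u₂ * x * v₁) * ((u₁ * y * v₂) * w₂ᵀ)) * r₂ := by simp only [Matrix.mul_assoc]
        _ = ((u₂ * x * v₁) * w₁ᵀ) * r₂ := by rw [h1]
        _ = w₂ᵀ * r₂ := by rw [h2]
      rwa [hr₂, Matrix.mul_one] at this
    · have h2 : (u₂ * x * v₁) * w₁ᵀ = w₂ᵀ := by
        calc (u₂ * x * v₁) * w₁ᵀ = u₂ * (x * (v₁ * w₁ᵀ)) := by simp only [Matrix.mul_assoc]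
        _ = u₂ * (v₂ * w₂ᵀ) := by rw [hx]
        _ = (u₂ * v₂) * w₂ᵀ := by simp only [Matrix.mul_assoc]
        _ = w₂ᵀ := by rw [hu₂, Matrix.one_mul]
      have h1 : (u₁ * y * v₂) * w₂ᵀ = w₁ᵀ := by
        calc (u₁ * y * v₂) * w₂ᵀ = u₁ * (y * (v₂ * w₂ᵀ)) := by simp only [Matrix.mul_assoc]
        _ = u₁ * (v₁ * w₁ᵀ) := by rw [hy]
        _ = (u₁ * v₁) * w₁ᵀ := by simp only [Matrix.mul_assoc]
        _ = w₁ᵀ := by rw [hu₁, Matrix.one_mul]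
      have : ((u₁ * y * v₂) * (u₂ * x * v₁)) * (w₁ᵀ * r₁) = w₁ᵀ * r₁ := by
        calc ((u₁ * y * v₂) * (u₂ * x * v₁)) * (w₁ᵀ * r₁)
            = ((u₁ * y * v₂) * ((u₂ * x * v₁) * w₁ᵀ)) * r₁ := by simp only [Matrix.mul_assoc]
        _ = ((u₁ * y * v₂) * w₂ᵀ) * r₁ := by rw [h2]
        _ = w₁ᵀ * r₁ := by rw [h1]
      rwa [hr₁, Matrix.mul_one] at this
    · calc w₂ᵀ = (u₂ * v₂) * w₂ᵀ := by rw [hu₂, Matrix.one_mul]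
      _ = u₂ * (v₂ * w₂ᵀ) := by simp only [Matrix.mul_assoc]
      _ = u₂ * (x * (v₁ * w₁ᵀ)) := by rw [hx]
      _ = (u₂ * x * v₁) * w₁ᵀ := by simp only [Matrix.mul_assoc]
  · rintro ⟨m, ⟨m', hmm', hm'm⟩, hw⟩
    refine ⟨v₂ * m * u₁, v₁ * m' * u₂, ?_, ?_⟩
    · calc (v₂ * m * u₁) * (v₁ * w₁ᵀ) = v₂ * m * (u₁ * v₁) * w₁ᵀ := by simp only [Matrix.mul_assoc]
      _ = v₂ * (m * w₁ᵀ) := by rw [hu₁]; simp only [Matrix.mul_one, Matrix.mul_assoc]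
      _ = v₂ * w₂ᵀ := by rw [← hw]
    · calc (v₁ * m' * u₂) * (v₂ * w₂ᵀ) = v₁ * m' * (u₂ * v₂) * w₂ᵀ := by simp only [Matrix.mul_assoc]
      _ = v₁ * (m' * (m * w₁ᵀ)) := by rw [hu₂, hw]; simp only [Matrix.mul_one, Matrix.mul_assoc]
      _ = v₁ * ((m' * m) * w₁ᵀ) := by simp only [Matrix.mul_assoc]
      _ = v₁ * w₁ᵀ := by rw [hm'm, Matrix.one_mul]
end

section
/- Let Q be a division ring, and let v₁, v₂, w₁, w₂ : Matrix (Fin n) (Fin k) Q each be of full rank k in the sense that v₁ and v₂ have left inverses and w₁ᵀ and w₂ᵀ have right inverses. Set a = v₁*w₁ᵀ and b = v₂*w₂ᵀ. Then a and b are R-related in the monoid M_n(Q) (there exist x, y with a*x = b and b*y = a) if and only if there exists an invertible k×k matrix m over Q (having a two-sided inverse) with v₂ = v₁*m, i.e. if and only if a and b have the same column space. -/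
open Matrix

/-- `a = v₁*w₁ᵀ` and `b = v₂*w₂ᵀ` are R-related in the full linear monoid iff
`v₂ = v₁*m` for some invertible `k × k` matrix `m` (same column space). -/
theorem rrelated_iff_same_column_space {Q : Type*} [DivisionRing Q] {n k : ℕ}
    (v₁ v₂ w₁ w₂ : Matrix (Fin n) (Fin k) Q)
    (hv₁ : ∃ u : Matrix (Fin k) (Fin n) Q, u * v₁ = 1)
    (hv₂ : ∃ u : Matrix (Fin k) (Fin n) Q, u * v₂ = 1)
    (hw₁ : ∃ u' : Matrix (Fin n) (Fin k) Q, w₁ᵀ * u' = 1)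
    (hw₂ : ∃ u' : Matrix (Fin n) (Fin k) Q, w₂ᵀ * u' = 1)
    (a b : Matrix (Fin n) (Fin n) Q)
    (hadef : a = v₁ * w₁ᵀ) (hbdef : b = v₂ * w₂ᵀ) :
    (∃ x y : Matrix (Fin n) (Fin n) Q, a * x = b ∧ b * y = a) ↔
      ∃ m : Matrix (Fin k) (Fin k) Q,
        (∃ m' : Matrix (Fin k) (Fin k) Q, m * m' = 1 ∧ m' * m = 1) ∧
        v₂ = v₁ * m := by
  obtain ⟨u₁, hu₁⟩ := hv₁
  obtain ⟨u₂, hu₂⟩ := hv₂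
  obtain ⟨u₁', hu₁'⟩ := hw₁
  obtain ⟨u₂', hu₂'⟩ := hw₂
  subst hadef hbdef
  constructor
  · rintro ⟨x, y, hx, hy⟩
    set m : Matrix (Fin k) (Fin k) Q := w₁ᵀ * x * u₂' with hm
    set m' : Matrix (Fin k) (Fin k) Q := w₂ᵀ * y * u₁' with hm'
    have h1 : v₁ * m = v₂ := by
      calc v₁ * (w₁ᵀ * x * u₂') = v₁ * w₁ᵀ * x * u₂' := by
            simp [Matrix.mul_assoc]
        _ = v₂ * (w₂ᵀ * u₂') := by rw [hx, Matrix.mul_assoc]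
        _ = v₂ := by rw [hu₂', Matrix.mul_one]
    have h2 : v₂ * m' = v₁ := by
      calc v₂ * (w₂ᵀ * y * u₁') = v₂ * w₂ᵀ * y * u₁' := by
            simp [Matrix.mul_assoc]
        _ = v₁ * (w₁ᵀ * u₁') := by rw [hy, Matrix.mul_assoc]
        _ = v₁ := by rw [hu₁', Matrix.mul_one]
    refine ⟨m, ⟨m', ?_, ?_⟩, h1.symm⟩
    · have : u₁ * (v₁ * (m * m')) = u₁ * v₁ := by
        rw [← Matrix.mul_assoc v₁, h1, h2]
      rwa [hu₁, ← Matrix.mul_assoc, hu₁, Matrix.one_mul] at this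
    · have : u₂ * (v₂ * (m' * m)) = u₂ * v₂ := by
        rw [← Matrix.mul_assoc v₂, h2, h1]
      rwa [hu₂, ← Matrix.mul_assoc, hu₂, Matrix.one_mul] at this
  · rintro ⟨m, ⟨m', hmm', hm'm⟩, hv⟩
    refine ⟨u₁' * m * w₂ᵀ, u₂' * m' * w₁ᵀ, ?_, ?_⟩
    · calc v₁ * w₁ᵀ * (u₁' * m * w₂ᵀ)
          = v₁ * (w₁ᵀ * u₁') * m * w₂ᵀ := by simp [Matrix.mul_assoc]
        _ = v₂ * w₂ᵀ := by rw [hu₁', Matrix.mul_one, ← hv]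
    · calc v₂ * w₂ᵀ * (u₂' * m' * w₁ᵀ)
          = v₂ * (w₂ᵀ * u₂') * m' * w₁ᵀ := by simp [Matrix.mul_assoc]
        _ = v₁ * (m * m') * w₁ᵀ := by
            rw [hu₂', Matrix.mul_one, hv]; simp [Matrix.mul_assoc]
        _ = v₁ * w₁ᵀ := by rw [hmm', Matrix.mul_one]
end

section
/- Let Q be a division ring and let e : Matrix (Fin n) (Fin n) Q be idempotent (e*e = e). Then there exist k ≤ n and matrices p, q : Matrix (Fin n) (Fin n) Q with p*q = 1 and q*p = 1 such that q*e*p is the diagonal 0–1 matrix with exactly its first k diagonal entries equal to 1, i.e. (q*e*p) i j = 1 if i = j and (i : ℕ) < k, and 0 otherwise. (Every idempotent matrix over a division ring is conjugate, by a change of basis adapted to its column space and null space, to a block identity matrix.) -/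
open Matrix Module LinearMap

/-
Right multiplication `v ↦ v ᵥ* e` is an idempotent operator on row vectors (over a noncommutative
`Q` it is this map, not `v ↦ e *ᵥ v`, that is `Q`-linear), so its range and kernel are
complementary. In a basis made of a basis of the range followed by a basis of the kernel it acts
as the block identity, and changing to that basis conjugates `e` by the matrix whose rows are the
basis vectors.
-/

namespace Module.Basis

variable {R : Type*} [Ring R] {m : Type*} [Fintype m] [DecidableEq m] (b : Basis m R (m → R))

theorem vecMul_of_repr_single (v : m → R) :
    v ᵥ* of (fun l j => b.repr (Pi.single l 1) j) = ⇑(b.repr v) := by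
  have hv : v = ∑ l, v l • Pi.single l (1 : R) := by
    simp_rw [← Pi.single_smul', smul_eq_mul, mul_one, Finset.univ_sum_single]
  funext j
  conv_rhs => rw [hv]
  simp [vecMul, dotProduct, Finsupp.finsetSum_apply]

theorem exists_conj_apply_eq_repr_vecMul :
    ∃ p q : Matrix m m R, p * q = 1 ∧ q * p = 1 ∧
      ∀ (M : Matrix m m R) (i j : m), (q * M * p) i j = b.repr (b i ᵥ* M) j := by
  refine ⟨of fun l j => b.repr (Pi.single l 1) j, of fun i j => b i j, ?_, ?_, fun M i j => ?_⟩
  · ext l j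
    simpa [mul_apply, one_eq_pi_single] using congrFun (b.sum_repr (Pi.single l 1)) j
  · ext i j
    rw [mul_apply_eq_vecMul, vecMul_of_repr_single]
    change b.repr (b i) j = _
    simp [repr_self, Finsupp.single_apply, one_apply]
  · rw [mul_apply_eq_vecMul, mul_apply_eq_vecMul, vecMul_of_repr_single]
    rfl

end Module.Basis

theorem LinearMap.exists_basis_apply_eq_ite_of_isIdempotentElem {K V : Type*} [DivisionRing K]
    [AddCommGroup V] [Module K V] [FiniteDimensional K V] {f : V →ₗ[K] V}
    (hf : IsIdempotentElem f) {n : ℕ} (hn : finrank K V = n) :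
    ∃ r ≤ n, ∃ b : Basis (Fin n) K V, ∀ i, f (b i) = if (i : ℕ) < r then b i else 0 := by
  have hcompl := hf.isCompl
  let b₀ := ((finBasis K (range f)).prod (finBasis K (ker f))).map
    (Submodule.prodEquivOfIsCompl _ _ hcompl)
  have hrank : finrank K (range f) + finrank K (ker f) = n :=
    (Submodule.finrank_add_eq_of_isCompl hcompl).trans hn
  refine ⟨_, hrank ▸ Nat.le_add_right _ _,
    b₀.reindex (finSumFinEquiv.trans (finCongr hrank)), fun i => ?_⟩
  obtain ⟨z, rfl⟩ := (finSumFinEquiv.trans (finCongr hrank)).surjective i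
  rcases z with t | t
  · simp [b₀, hf.mem_range_iff.mp]
  · simp [b₀]

theorem Matrix.isIdempotentElem_vecMulLinear {R : Type*} [Ring R] {m : Type*} [Fintype m]
    {e : Matrix m m R} (he : IsIdempotentElem e) : IsIdempotentElem e.vecMulLinear :=
  LinearMap.ext fun v => by simp [vecMul_vecMul, he.eq]

/-- Every idempotent matrix over a division ring is conjugate, by a change of
basis, to a diagonal 0–1 matrix whose first `k` diagonal entries equal `1`. -/
theorem idempotent_conjugate_block_identity {Q : Type*} [DivisionRing Q] {n : ℕ}
    (e : Matrix (Fin n) (Fin n) Q) (he : e * e = e) :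
    ∃ k : ℕ, k ≤ n ∧
      ∃ p q : Matrix (Fin n) (Fin n) Q, p * q = 1 ∧ q * p = 1 ∧
        ∀ i j : Fin n,
          (q * e * p) i j = if i = j ∧ (i : ℕ) < k then 1 else 0 := by
  obtain ⟨r, hr, b, hb⟩ := exists_basis_apply_eq_ite_of_isIdempotentElem
    (isIdempotentElem_vecMulLinear he) (finrank_fin_fun Q)
  obtain ⟨p, q, hpq, hqp, hconj⟩ := b.exists_conj_apply_eq_repr_vecMul
  refine ⟨r, hr, p, q, hpq, hqp, fun i j => ?_⟩
  rw [hconj, ← vecMulLinear_apply, hb i]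
  by_cases hi : (i : ℕ) < r <;> simp [hi, Finsupp.single_apply]
end
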